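/- arXiv:1003.4787 — 2 statements merged into one kernel-verified Lean document; each statement's English description precedes it below -/
import Mathlib

section
/- Let Σ be a finite multiset of non-zero integers such that (i) for every integer ℓ, ℓ and -ℓ are not both in Σ; (ii) for every α ∈ Σ, the multiset Σ is congruent to -Σ modulo α (i.e., there is a bijection θ : Σ → Σ with θ(β) + β ≡ 0 mod α for all β); (iii) the sum of the elements of Σ is 0; (iv) there exists n ∈ ℕ such that n occurs in Σ with multiplicity exactly 1 and no element of Σ has absolute value greater than n. Then there exist natural numbers a, b ≥ 1 such that Σ = {a+b, -a, -b}. -/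
/-!
Write `g x = #x - #(-x)` for the signed multiplicity. If `±t ∈ Σ`, the bijection `θ` shows that
`Σ` has as many elements `≡ r` as `≡ -r (mod t)`; when `Σ ⊆ [-t, 2t]` each of these two residue
classes meets `Σ` in at most three points, which gives an identity between six multiplicities.
For `t = n` it reads `g (n - r) = g r`.

If a positive `p ≠ n` occurred in `Σ`, take it maximal and let `-a` be the minimum of `Σ` (negative,
since the sum vanishes). The reflection `r ↦ n - r` gives `n ≤ 2p` and `n ≤ 2a`, so `Σ ⊆ [-t, 2t]`
for `t = max p a`; the six-term identity with `r = min p a` then forces `g r` and `g t` to have the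
same sign, whereas `g p > 0 > g a`. Hence `n` is the only positive element, `z ↦ -n - z` preserves
the rest of `Σ`, and comparing its sum with that of its image shows that it has two elements.
-/

theorem Int.eq_neg_or_eq_zero_or_eq_of_dvd_of_abs_lt {t x : ℤ} (hd : t ∣ x) (hx : |x| < 2 * t) :
    x = -t ∨ x = 0 ∨ x = t := by
  obtain ⟨k, rfl⟩ := hd
  have ht : 0 < t := by linarith [abs_nonneg (t * k)]
  have hk : |k| < 2 := by
    rw [abs_mul, abs_of_pos ht] at hx
    exact lt_of_mul_lt_mul_left (by linarith : t * |k| < t * 2) ht.le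
  rw [abs_lt] at hk
  obtain ⟨hk₁, hk₂⟩ := hk
  interval_cases k <;> simp

namespace Multiset

theorem countP_dvd_sub_eq_countP_dvd_add {S : Multiset ℤ} {θ : ℤ → ℤ} {t : ℤ}
    (hθ : S.map θ = S) (hdvd : ∀ β ∈ S, t ∣ θ β + β) (r : ℤ) :
    S.countP (fun β => t ∣ β - r) = S.countP (fun β => t ∣ β + r) := by
  conv_lhs => rw [← hθ]
  rw [countP_map, ← countP_eq_card_filter]
  refine countP_congr rfl fun β hβ => ?_
  rw [show θ β - r = (θ β + β) - (β + r) by ring, dvd_sub_right (hdvd β hβ)]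

theorem countP_dvd_sub_eq_count_add_count_add_count {S : Multiset ℤ} {t r : ℤ}
    (hS : ∀ β ∈ S, |β - r| < 2 * t) :
    S.countP (fun β => t ∣ β - r) = S.count (r - t) + S.count r + S.count (r + t) := by
  induction S using Multiset.induction with
  | empty => simp
  | cons β S ih =>
    have hβr := hS β (mem_cons_self β S)
    have ht : 0 < t := by linarith [abs_nonneg (β - r)]
    have hβ : t ∣ β - r ↔ β = r - t ∨ β = r ∨ β = r + t := by
      constructor
      · intro hd
        have := Int.eq_neg_or_eq_zero_or_eq_of_dvd_of_abs_lt hd hβr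
        omega
      · rintro (rfl | rfl | rfl) <;> simp
    simp only [countP_cons, count_cons, hβ, ih fun x hx => hS x (mem_cons_of_mem hx)]
    split_ifs <;> omega

theorem map_eq_self_of_count_eq {α : Type*} [DecidableEq α] {S : Multiset α} {f : α → α}
    (hf : Function.Involutive f) (h : ∀ x, S.count (f x) = S.count x) : S.map f = S := by
  ext x
  rw [← hf x, count_map_eq_count' f S hf.injective, hf x, h]

theorem card_eq_two_of_map_sub_eq_self {S : Multiset ℤ} {c : ℤ} (hc : c ≠ 0)
    (hS : S.map (c - ·) = S) (hsum : S.sum = c) : card S = 2 := by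
  have h := congrArg sum hS
  rw [sum_map_sub, map_const', sum_replicate, map_id', hsum, nsmul_eq_mul] at h
  have : (card S : ℤ) * c = 2 * c := by linarith
  exact_mod_cast mul_right_cancel₀ hc this

end Multiset

open Multiset

structure Admissible (S : Multiset ℤ) (n : ℤ) : Prop where
  neg_not_mem : ∀ ℓ ∈ S, -ℓ ∉ S
  exists_map_eq_dvd_add : ∀ α ∈ S, ∃ θ : ℤ → ℤ, S.map θ = S ∧ ∀ β ∈ S, α ∣ θ β + β
  count_eq_one : S.count n = 1
  abs_le : ∀ ℓ ∈ S, |ℓ| ≤ n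

def signedCount (S : Multiset ℤ) (x : ℤ) : ℤ := S.count x - S.count (-x)

namespace Admissible

variable {S : Multiset ℤ} {n : ℤ}

theorem mem (h : Admissible S n) : n ∈ S :=
  count_pos.1 (by rw [h.count_eq_one]; exact one_pos)

theorem neg_lt_and_le (h : Admissible S n) {β : ℤ} (hβ : β ∈ S) : -n < β ∧ β ≤ n := by
  obtain ⟨hlo, hhi⟩ := _root_.abs_le.1 (h.abs_le β hβ)
  refine ⟨lt_of_le_of_ne hlo ?_, hhi⟩
  rintro rfl
  exact h.neg_not_mem n h.mem hβ

theorem pos (h : Admissible S n) : 0 < n := by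
  linarith [(h.neg_lt_and_le h.mem).1]

theorem signedCount_pos_iff (h : Admissible S n) {x : ℤ} : 0 < signedCount S x ↔ x ∈ S := by
  unfold signedCount
  constructor
  · intro hx
    by_contra hx'
    rw [count_eq_zero.2 hx'] at hx
    omega
  · intro hx
    have := count_pos.2 hx
    rw [count_eq_zero.2 (h.neg_not_mem x hx)]
    omega

theorem signedCount_neg_iff (h : Admissible S n) {x : ℤ} : signedCount S x < 0 ↔ -x ∈ S := by
  rw [← h.signedCount_pos_iff]
  unfold signedCount
  rw [neg_neg]
  omega

theorem count_sub_add_count_add_count_add_eq (h : Admissible S n) {t r : ℤ}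
    (ht : t ∈ S ∨ -t ∈ S) (hlow : ∀ β ∈ S, -t ≤ β) (h2t : n ≤ 2 * t) (hr : 0 < r) (hrt : r < t) :
    S.count (r - t) + S.count r + S.count (r + t) =
      S.count (-r) + S.count (t - r) + S.count (2 * t - r) := by
  obtain ⟨θ, hθ, hdvd⟩ : ∃ θ : ℤ → ℤ, S.map θ = S ∧ ∀ β ∈ S, t ∣ θ β + β := by
    rcases ht with ht | ht
    · exact h.exists_map_eq_dvd_add t ht
    · simpa using h.exists_map_eq_dvd_add (-t) ht
  have hwindow : ∀ β ∈ S, -t ≤ β ∧ β ≤ 2 * t :=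
    fun β hβ => ⟨hlow β hβ, (h.neg_lt_and_le hβ).2.trans h2t⟩
  calc S.count (r - t) + S.count r + S.count (r + t)
      = S.countP (fun β => t ∣ β - r) := by
        refine (countP_dvd_sub_eq_count_add_count_add_count fun β hβ => ?_).symm
        have := hwindow β hβ
        exact abs_lt.2 ⟨by linarith, by linarith⟩
    _ = S.countP (fun β => t ∣ β + r) := countP_dvd_sub_eq_countP_dvd_add hθ hdvd r
    _ = S.countP (fun β => t ∣ β - (t - r)) := countP_congr rfl fun β _ => by
        rw [show β - (t - r) = β + r - t by ring, dvd_sub_self_right]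
    _ = S.count (t - r - t) + S.count (t - r) + S.count (t - r + t) := by
        refine countP_dvd_sub_eq_count_add_count_add_count fun β hβ => ?_
        have := hwindow β hβ
        exact abs_lt.2 ⟨by linarith, by linarith⟩
    _ = S.count (-r) + S.count (t - r) + S.count (2 * t - r) := by ring_nf

theorem signedCount_sub (h : Admissible S n) {r : ℤ} (hr : 0 < r) (hrn : r < n) :
    signedCount S (n - r) = signedCount S r := by
  have key := h.count_sub_add_count_add_count_add_eq (Or.inl h.mem)
    (fun β hβ => (h.neg_lt_and_le hβ).1.le) (by linarith) hr hrn
  have h₁ : S.count (r + n) = 0 := count_eq_zero.2 fun hm => by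
    linarith [(h.neg_lt_and_le hm).2]
  have h₂ : S.count (2 * n - r) = 0 := count_eq_zero.2 fun hm => by
    linarith [(h.neg_lt_and_le hm).2]
  unfold signedCount
  rw [show -(n - r) = r - n by ring]
  omega

theorem signedCount_mul_nonneg (h : Admissible S n) {r t : ℤ} (hr : 0 < r) (hrt : r < t)
    (htn : t < n) (h2t : n ≤ 2 * t) (hlow : ∀ β ∈ S, -t ≤ β) (hhigh : ∀ β ∈ S, β ≠ n → β ≤ t)
    (hr_max : ∀ x, r < x → x < n → signedCount S x * signedCount S r ≤ 0) :
    0 ≤ signedCount S r * signedCount S t := by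
  by_contra! hsign
  have ht : t ∈ S ∨ -t ∈ S := by
    rcases lt_or_gt_of_ne (show signedCount S t ≠ 0 by rintro h0; simp [h0] at hsign) with h' | h'
    · exact Or.inr (h.signedCount_neg_iff.1 h')
    · exact Or.inl (h.signedCount_pos_iff.1 h')
  have key := h.count_sub_add_count_add_count_add_eq ht hlow h2t hr hrt
  have hcount : ∀ x, t < x → x ≠ n → S.count x = 0 := fun x hx hxn =>
    count_eq_zero.2 fun hm => by linarith [hhigh x hm hxn]
  have hrt_ne : r + t ≠ n := by
    intro e
    have := h.signedCount_sub hr (by linarith)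
    rw [show n - r = t by linarith] at this
    rw [this] at hsign
    exact (mul_self_nonneg _).not_gt hsign
  have h₁ := hcount (r + t) (by linarith) hrt_ne
  have hg : ∀ x, signedCount S x = S.count x - S.count (-x) := fun _ => rfl
  have hgtr := hg (t - r)
  rw [show -(t - r) = r - t by ring] at hgtr
  by_cases he : 2 * t - r = n
  · have h₂ : S.count (2 * t - r) = 1 := he ▸ h.count_eq_one
    have hgt := h.signedCount_sub (by linarith) htn
    rw [show n - t = t - r by linarith] at hgt
    have : signedCount S r = signedCount S t + 1 := by rw [hg r]; omega
    rcases le_or_gt 0 (signedCount S t) with h' | h' <;> nlinarith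
  · have h₂ := hcount (2 * t - r) (by linarith) he
    have hgr : signedCount S r = signedCount S (t - r) := by rw [hg r]; omega
    have := hr_max (n - (t - r)) (by linarith) (by linarith)
    rw [h.signedCount_sub (by linarith) (by linarith), ← hgr] at this
    have h0 := mul_self_eq_zero.1 (le_antisymm this (mul_self_nonneg _))
    simp [h0] at hsign

theorem exists_neg_min (h : Admissible S n) (hsum : S.sum = 0) :
    ∃ a, 0 < a ∧ -a ∈ S ∧ ∀ β ∈ S, -a ≤ β := by
  obtain ⟨m, hm, hmin⟩ := exists_min_image id (card_pos.1 (card_pos_iff_exists_mem.2 ⟨n, h.mem⟩))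
  refine ⟨-m, ?_, by rwa [neg_neg], fun β hβ => by simpa using hmin β hβ⟩
  by_contra! hm0
  have := single_le_sum (fun x hx => (neg_nonpos.1 hm0).trans (hmin x hx)) n h.mem
  linarith [h.pos]

theorem false_of_pos_max (h : Admissible S n) {p a : ℤ} (hp : p ∈ S) (hp0 : 0 < p) (hpn : p ≠ n)
    (hpmax : ∀ β ∈ S, β ≠ n → β ≤ p) (ha0 : 0 < a) (ha : -a ∈ S) (hamin : ∀ β ∈ S, -a ≤ β) :
    False := by
  have hpn' : p < n := lt_of_le_of_ne (h.neg_lt_and_le hp).2 hpn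
  have han : a < n := by linarith [(h.neg_lt_and_le ha).1]
  have hgp : 0 < signedCount S p := h.signedCount_pos_iff.2 hp
  have hga : signedCount S a < 0 := h.signedCount_neg_iff.2 ha
  have h2p : n ≤ 2 * p := by
    rw [← h.signedCount_sub hp0 hpn', h.signedCount_pos_iff] at hgp
    linarith [hpmax _ hgp (by linarith)]
  have h2a : n ≤ 2 * a := by
    rw [← h.signedCount_sub ha0 han, h.signedCount_neg_iff] at hga
    linarith [hamin _ hga]
  have hsign_above_p : ∀ x, p < x → x < n → signedCount S x ≤ 0 := fun x hpx hxn =>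
    not_lt.1 fun hx => by linarith [hpmax x (h.signedCount_pos_iff.1 hx) hxn.ne]
  have hsign_above_a : ∀ x, a < x → 0 ≤ signedCount S x := fun x hax =>
    not_lt.1 fun hx => by linarith [hamin _ (h.signedCount_neg_iff.1 hx)]
  rcases lt_or_gt_of_ne (show p ≠ a by rintro rfl; exact h.neg_not_mem p hp ha) with hpa | hap
  · have := h.signedCount_mul_nonneg hp0 hpa han h2a hamin
      (fun β hβ hβn => (hpmax β hβ hβn).trans hpa.le)
      (fun x hpx hxn => mul_nonpos_of_nonpos_of_nonneg (hsign_above_p x hpx hxn) hgp.le)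
    nlinarith
  · have := h.signedCount_mul_nonneg ha0 hap hpn' h2p (fun β hβ => by linarith [hamin β hβ]) hpmax
      (fun x hax _ => mul_nonpos_of_nonneg_of_nonpos (hsign_above_a x hax) hga.le)
    nlinarith

theorem lt_zero_of_ne (h : Admissible S n) (hsum : S.sum = 0) {β : ℤ} (hβ : β ∈ S) (hβn : β ≠ n) :
    β < 0 := by
  by_contra! hβ0
  have hβ_ne_zero : β ≠ 0 := by
    rintro rfl
    exact h.neg_not_mem 0 hβ (by rwa [neg_zero])
  have hβT : β ∈ S.filter (· ≠ n) := mem_filter.2 ⟨hβ, hβn⟩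
  obtain ⟨p, hp, hpmax⟩ := exists_max_image id (card_pos.1 (card_pos_iff_exists_mem.2 ⟨β, hβT⟩))
  rw [mem_filter] at hp
  obtain ⟨a, ha0, ha, hamin⟩ := h.exists_neg_min hsum
  have hβp : β ≤ p := hpmax β hβT
  exact h.false_of_pos_max hp.1 (by omega) hp.2
    (fun γ hγ hγn => hpmax γ (mem_filter.2 ⟨hγ, hγn⟩)) ha0 ha hamin

theorem neg_lt_and_lt_zero_of_mem_erase (h : Admissible S n) (hsum : S.sum = 0) {z : ℤ}
    (hz : z ∈ S.erase n) : -n < z ∧ z < 0 := by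
  have hzn : z ≠ n := by
    rintro rfl
    have := count_pos.2 hz
    rw [count_erase_self, h.count_eq_one] at this
    exact this.false
  have hzS := mem_of_mem_erase hz
  exact ⟨(h.neg_lt_and_le hzS).1, h.lt_zero_of_ne hsum hzS hzn⟩

theorem count_erase_neg_sub (h : Admissible S n) (hsum : S.sum = 0) (y : ℤ) :
    (S.erase n).count (-n - y) = (S.erase n).count y := by
  by_cases hy : -n < y ∧ y < 0
  · have hnot_mem : ∀ x, 0 < x → x < n → S.count x = 0 := fun x hx hxn =>
      count_eq_zero.2 fun hm => by linarith [h.lt_zero_of_ne hsum hm hxn.ne]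
    have := h.signedCount_sub (r := -y) (by linarith) (by linarith)
    unfold signedCount at this
    rw [hnot_mem (n - -y) (by linarith) (by linarith), hnot_mem (-y) (by linarith) (by linarith),
      show -(n - -y) = -n - y by ring, neg_neg] at this
    rw [count_erase_of_ne (by linarith), count_erase_of_ne (by linarith)]
    omega
  · have hnot_mem : ∀ x, ¬(-n < x ∧ x < 0) → (S.erase n).count x = 0 := fun x hx =>
      count_eq_zero.2 fun hm => hx (h.neg_lt_and_lt_zero_of_mem_erase hsum hm)
    rw [hnot_mem y hy, hnot_mem (-n - y) fun ⟨h₁, h₂⟩ => hy ⟨by linarith, by linarith⟩]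

theorem exists_eq_add_neg_neg (h : Admissible S n) (hsum : S.sum = 0) :
    ∃ a b : ℕ, 1 ≤ a ∧ 1 ≤ b ∧ S = {(a : ℤ) + b, -(a : ℤ), -(b : ℤ)} := by
  have hS : S = n ::ₘ S.erase n := (cons_erase h.mem).symm
  have hsum' : (S.erase n).sum = -n := by
    rw [hS, sum_cons] at hsum
    linarith
  have hmap : (S.erase n).map (-n - ·) = S.erase n :=
    map_eq_self_of_count_eq (fun y => sub_sub_cancel (-n) y) (h.count_erase_neg_sub hsum)
  obtain ⟨x, y, hxy⟩ :=
    card_eq_two.1 (card_eq_two_of_map_sub_eq_self (by linarith [h.pos]) hmap hsum')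
  have hx := h.neg_lt_and_lt_zero_of_mem_erase hsum (by simp [hxy] : x ∈ S.erase n)
  have hy := h.neg_lt_and_lt_zero_of_mem_erase hsum (by simp [hxy] : y ∈ S.erase n)
  rw [hxy, insert_eq_cons, sum_cons, sum_singleton] at hsum'
  obtain ⟨a, ha⟩ := Int.eq_ofNat_of_zero_le (show 0 ≤ -x by linarith)
  obtain ⟨b, hb⟩ := Int.eq_ofNat_of_zero_le (show 0 ≤ -y by linarith)
  refine ⟨a, b, by omega, by omega, ?_⟩
  rw [hS, hxy, ← ha, ← hb, neg_neg, neg_neg, show n = -x + -y by linarith]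
  rfl

end Admissible

theorem stmt_0_general (S : Multiset ℤ)
    (h1 : ∀ ℓ : ℤ, ¬(ℓ ∈ S ∧ -ℓ ∈ S))
    (h2 : ∀ α ∈ S, ∃ θ : ℤ → ℤ, S.map θ = S ∧ ∀ β ∈ S, α ∣ θ β + β)
    (h3 : S.sum = 0)
    (h4 : ∃ n : ℕ, S.count (n : ℤ) = 1 ∧ ∀ ℓ ∈ S, |ℓ| ≤ (n : ℤ)) :
    ∃ a b : ℕ, 1 ≤ a ∧ 1 ≤ b ∧
      S = {((a : ℤ) + b), -(a : ℤ), -(b : ℤ)} := by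
  obtain ⟨n, hn, hbound⟩ := h4
  exact Admissible.exists_eq_add_neg_neg ⟨fun ℓ hℓ hneg => h1 ℓ ⟨hℓ, hneg⟩, h2, hn, hbound⟩ h3

theorem stmt_0 (S : Multiset ℤ) (h0 : (0 : ℤ) ∉ S)
    (h1 : ∀ ℓ : ℤ, ¬(ℓ ∈ S ∧ -ℓ ∈ S))
    (h2 : ∀ α ∈ S, ∃ θ : ℤ → ℤ, S.map θ = S ∧ ∀ β ∈ S, α ∣ θ β + β)
    (h3 : S.sum = 0)
    (h4 : ∃ n : ℕ, S.count (n : ℤ) = 1 ∧ ∀ ℓ ∈ S, |ℓ| ≤ (n : ℤ)) :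
    ∃ a b : ℕ, 1 ≤ a ∧ 1 ≤ b ∧
      S = {((a : ℤ) + b), -(a : ℤ), -(b : ℤ)} :=
  stmt_0_general S h1 h2 h3 h4
end

section
/- Let Σ be a finite multiset of non-zero integers containing a maximal element n ≥ 1 with multiplicity 1 and no elements of absolute value exceeding n, such that ℓ and -ℓ never both occur in Σ, and such that there is an involutive bijection θ : Σ → Σ with θ(α) + α ≡ 0 (mod n). Then for every positive α ∈ Σ with α ≠ n, θ(α) is positive and θ(α) + α = n; and for every negative α ∈ Σ, θ(α) is negative and θ(α) + α = -n. -/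
/-! θ α + α is a multiple of n, and it is non-zero because θ α = -α would put both α and -α in S.
Since |θ α|, |α| ≤ n, with |α| = n only for α = n (as -n ∉ S), the only multiple available is n
for positive α ≠ n and -n for negative α. -/

theorem Int.eq_of_dvd_of_ne_zero_of_neg_lt_of_lt_two_mul {n m : ℤ} (hn : 0 < n) (hdvd : n ∣ m)
    (hm : m ≠ 0) (hlo : -n < m) (hhi : m < 2 * n) : m = n := by
  obtain ⟨k, rfl⟩ := hdvd
  have hk : k ≠ 0 := by rintro rfl; simp at hm
  have : -1 < k := by nlinarith
  have : k < 2 := by nlinarith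
  obtain rfl : k = 1 := by omega
  exact mul_one n

theorem Int.eq_neg_of_dvd_of_ne_zero_of_neg_two_mul_lt_of_lt {n m : ℤ} (hn : 0 < n) (hdvd : n ∣ m)
    (hm : m ≠ 0) (hlo : -(2 * n) < m) (hhi : m < n) : m = -n := by
  have := Int.eq_of_dvd_of_ne_zero_of_neg_lt_of_lt_two_mul hn (dvd_neg.2 hdvd) (neg_ne_zero.2 hm)
    (by omega) (by omega)
  omega

theorem stmt_13_general (S : Multiset ℤ) (n : ℤ) (hn : 1 ≤ n)
    (hmem : n ∈ S)
    (hmax : ∀ ℓ ∈ S, |ℓ| ≤ n)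
    (hopp : ∀ ℓ : ℤ, ¬(ℓ ∈ S ∧ -ℓ ∈ S))
    (θ : ℤ → ℤ) (hbij : S.map θ = S)
    (hcong : ∀ α ∈ S, n ∣ θ α + α) :
    (∀ α ∈ S, 0 < α → α ≠ n → 0 < θ α ∧ θ α + α = n) ∧
    (∀ α ∈ S, α < 0 → θ α < 0 ∧ θ α + α = -n) := by
  have hθmem : ∀ α ∈ S, θ α ∈ S := fun α hα => hbij ▸ Multiset.mem_map_of_mem θ hα
  have hsum_ne : ∀ α ∈ S, θ α + α ≠ 0 := fun α hα h =>
    hopp α ⟨hα, eq_neg_of_add_eq_zero_left h ▸ hθmem α hα⟩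
  have hθbound : ∀ α ∈ S, -n ≤ θ α ∧ θ α ≤ n := fun α hα => abs_le.mp (hmax _ (hθmem α hα))
  refine ⟨fun α hα hpos hαn => ?_, fun α hα hneg => ?_⟩
  · have hlt : α < n := lt_of_le_of_ne (le_of_abs_le (hmax α hα)) hαn
    have := Int.eq_of_dvd_of_ne_zero_of_neg_lt_of_lt_two_mul (by omega) (hcong α hα)
      (hsum_ne α hα) (by linarith [hθbound α hα]) (by linarith [hθbound α hα])
    omega
  · have hgt : -n < α :=
      lt_of_le_of_ne (neg_le_of_abs_le (hmax α hα)) fun h => hopp n ⟨hmem, by rwa [h]⟩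
    have := Int.eq_neg_of_dvd_of_ne_zero_of_neg_two_mul_lt_of_lt (by omega) (hcong α hα)
      (hsum_ne α hα) (by linarith [hθbound α hα]) (by linarith [hθbound α hα])
    omega

theorem stmt_13 (S : Multiset ℤ) (h0 : (0 : ℤ) ∉ S) (n : ℤ) (hn : 1 ≤ n)
    (hmem : n ∈ S) (hcount : S.count n = 1)
    (hmax : ∀ ℓ ∈ S, |ℓ| ≤ n)
    (hopp : ∀ ℓ : ℤ, ¬(ℓ ∈ S ∧ -ℓ ∈ S))
    (θ : ℤ → ℤ) (hbij : S.map θ = S)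
    (hinv : ∀ α ∈ S, θ (θ α) = α)
    (hcong : ∀ α ∈ S, n ∣ θ α + α) :
    (∀ α ∈ S, 0 < α → α ≠ n → 0 < θ α ∧ θ α + α = n) ∧
    (∀ α ∈ S, α < 0 → θ α < 0 ∧ θ α + α = -n) :=
  stmt_13_general S n hn hmem hmax hopp θ hbij hcong
end
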